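/- arXiv:2307.07543 — 7 statements merged into one kernel-verified Lean document; each statement's English description precedes it below -/
import Mathlib

section
/- Let K be a field and n a natural number. For every n×n matrix A over K with det A = 1, there exists an n×n matrix M with entries in the polynomial ring K[t] such that det M = 1 in K[t], the matrix obtained by evaluating every entry of M at t = 0 is the identity matrix, and the matrix obtained by evaluating every entry of M at t = 1 is A. -/
namespace SLPathAux

open Matrix Polynomial

variable {K : Type*} [Field K] {m : Type*} [Fintype m] [DecidableEq m]

/-- `Conn A` says that `A` is connected to the identity by a polynomial path inside `SL`. -/
def Conn (A : Matrix m m K) : Prop :=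
  ∃ M : Matrix m m (Polynomial K),
    M.det = 1 ∧ M.map (Polynomial.eval 0) = 1 ∧ M.map (Polynomial.eval 1) = A

lemma transvection_map (f : Polynomial K →+* K) (i j : m) (p : Polynomial K) :
    (transvection i j p).map f = transvection i j (f p) := by
  ext a b
  simp [transvection, Matrix.map_apply, Matrix.add_apply, Matrix.single, Matrix.one_apply,
    apply_ite f]

lemma conn_one : Conn (1 : Matrix m m K) :=
  ⟨1, det_one, Matrix.map_one _ (by simp) (by simp), Matrix.map_one _ (by simp) (by simp)⟩

lemma conn_mul {A B : Matrix m m K} (hA : Conn A) (hB : Conn B) : Conn (A * B) := by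
  obtain ⟨M, hM1, hM2, hM3⟩ := hA
  obtain ⟨N, hN1, hN2, hN3⟩ := hB
  refine ⟨M * N, by simp [hM1, hN1], ?_, ?_⟩
  · rw [show (Polynomial.eval (0 : K)) = ⇑(Polynomial.evalRingHom 0) from rfl,
      Matrix.map_mul]
    rw [show ⇑(Polynomial.evalRingHom (0 : K)) = Polynomial.eval 0 from rfl, hM2, hN2, one_mul]
  · rw [show (Polynomial.eval (1 : K)) = ⇑(Polynomial.evalRingHom 1) from rfl,
      Matrix.map_mul]
    rw [show ⇑(Polynomial.evalRingHom (1 : K)) = Polynomial.eval 1 from rfl, hM3, hN3]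

lemma conn_transvection (i j : m) (hij : i ≠ j) (c : K) : Conn (transvection i j c) := by
  refine ⟨transvection i j (Polynomial.C c * Polynomial.X), det_transvection_of_ne _ _ hij _,
    ?_, ?_⟩
  · rw [← Polynomial.coe_evalRingHom, transvection_map]
    simp
  · rw [← Polynomial.coe_evalRingHom, transvection_map]
    simp

set_option maxHeartbeats 1000000 in
/-- Whitehead-type identity: a diagonal matrix with `a` and `a⁻¹` at two places is a
product of transvections. -/
lemma whitehead (i j : m) (h : i ≠ j) (a : K) (ha : a ≠ 0) :
    transvection i j a * transvection j i (-a⁻¹) * transvection i j a *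
      transvection i j (-1) * transvection j i 1 * transvection i j (-1) =
    diagonal (Function.update (Function.update (fun _ => (1:K)) i a) j a⁻¹) := by
  simp only [transvection, Matrix.add_mul, Matrix.mul_add, Matrix.one_mul, Matrix.mul_one,
    single_mul_single_same, single_mul_single_of_ne, h, h.symm, ne_eq, not_false_eq_true,
    mul_zero, zero_mul, add_zero, zero_add, Matrix.mul_zero, Matrix.zero_mul]
  ext p q
  simp only [Matrix.add_apply, Matrix.single, Matrix.of_apply, Matrix.one_apply,
    Matrix.diagonal_apply, Function.update_apply]
  rcases eq_or_ne p i with hpi|hpi <;> rcases eq_or_ne p j with hpj|hpj <;>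
    rcases eq_or_ne q i with hqi|hqi <;> rcases eq_or_ne q j with hqj|hqj <;>
    simp_all [eq_comm]

lemma conn_pair (i j : m) (h : i ≠ j) (a : K) (ha : a ≠ 0) :
    Conn (diagonal (Function.update (Function.update (fun _ => (1:K)) i a) j a⁻¹)) := by
  rw [← whitehead i j h a ha]
  exact conn_mul (conn_mul (conn_mul (conn_mul (conn_mul
    (conn_transvection i j h a) (conn_transvection j i h.symm (-a⁻¹)))
    (conn_transvection i j h a)) (conn_transvection i j h (-1)))
    (conn_transvection j i h.symm 1)) (conn_transvection i j h (-1))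

lemma conn_diagonal {n : ℕ} (D : Fin n → K) (hD : ∏ i, D i = 1) : Conn (diagonal D) := by
  suffices H : ∀ k : ℕ, ∀ D : Fin n → K, ∏ i, D i = 1 →
      (∀ i : Fin n, k ≤ (i : ℕ) → D i = 1) → Conn (diagonal D) by
    exact H n D hD (fun i hi => absurd i.isLt (not_lt.2 hi))
  intro k
  induction k with
  | zero =>
    intro D hprod hsupp
    have hD1 : D = fun _ => (1 : K) := funext fun i => hsupp i (Nat.zero_le _)
    rw [hD1]
    have : diagonal (fun _ => (1:K)) = (1 : Matrix (Fin n) (Fin n) K) := diagonal_one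
    rw [this]
    exact conn_one
  | succ k IH =>
    intro D hprod hsupp
    by_cases hk : k < n
    · rcases Nat.eq_zero_or_pos k with hk0 | hk1
      · -- k = 0 : the product is just `D ⟨0⟩`, which must be 1
        subst hk0
        apply IH D hprod
        intro i _
        rcases Nat.eq_zero_or_pos (i : ℕ) with hi0 | hi1
        · have hi : i = ⟨0, hk⟩ := Fin.ext hi0
          have : ∏ x, D x = D ⟨0, hk⟩ := by
            apply Finset.prod_eq_single_of_mem _ (Finset.mem_univ _)
            intro b _ hb
            apply hsupp
            have : (b : ℕ) ≠ 0 := fun hb0 => hb (Fin.ext hb0)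
            omega
          rw [hi, ← this, hprod]
        · exact hsupp i hi1
      · -- 1 ≤ k < n : move the entry at position k to position k-1
        set ik : Fin n := ⟨k, hk⟩ with hik
        set jk : Fin n := ⟨k - 1, by omega⟩ with hjk
        have hne : ik ≠ jk := Fin.ne_of_val_ne (show k ≠ k - 1 by omega)
        set a : K := D ik with haa
        have ha : a ≠ 0 := by
          intro h0
          have : ∏ i, D i = 0 := Finset.prod_eq_zero (Finset.mem_univ ik) h0
          rw [hprod] at this
          exact one_ne_zero this
        set W : Fin n → K := Function.update (Function.update (fun _ => (1:K)) ik a) jk a⁻¹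
          with hW
        set D' : Fin n → K := Function.update (Function.update D ik 1) jk (D jk * a) with hD'
        have hfun : (fun i => D' i * W i) = D := by
          funext x
          rcases eq_or_ne x jk with rfl | hxj
          · simp only [hD', hW, Function.update_self]
            field_simp
          · rcases eq_or_ne x ik with rfl | hxi
            · simp only [hD', hW, Function.update_of_ne hne, Function.update_self,
                Function.update_of_ne hxj]
              rw [one_mul, ← haa]
            · simp only [hD', hW, Function.update_of_ne hxj, Function.update_of_ne hxi]
              rw [mul_one]
        have key : diagonal D = diagonal D' * diagonal W := by
          rw [diagonal_mul_diagonal, hfun]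
        have hikmem : ik ∈ Finset.univ \ {jk} := by
          simp [Finset.mem_sdiff, hne]
        have h1 : ∏ i, D' i =
            (D jk * a) * ∏ i ∈ Finset.univ \ {jk}, Function.update D ik 1 i :=
          Finset.prod_update_of_mem (Finset.mem_univ _) _ _
        have h2 : ∏ i ∈ Finset.univ \ {jk}, Function.update D ik 1 i =
            1 * ∏ i ∈ (Finset.univ \ {jk}) \ {ik}, D i :=
          Finset.prod_update_of_mem hikmem _ _
        have h3 : ∏ i, D i = D jk * ∏ i ∈ Finset.univ.erase jk, D i :=
          (Finset.mul_prod_erase _ _ (Finset.mem_univ _)).symm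
        have h4 : ∏ i ∈ Finset.univ.erase jk, D i =
            D ik * ∏ i ∈ (Finset.univ.erase jk).erase ik, D i :=
          (Finset.mul_prod_erase _ _ (by rw [Finset.erase_eq]; exact hikmem)).symm
        rw [Finset.erase_eq] at h3 h4
        rw [Finset.erase_eq] at h4
        have hprod' : ∏ i, D' i = 1 := by
          rw [h1, h2]
          rw [h3, h4] at hprod
          linear_combination hprod
        have hsupp' : ∀ i : Fin n, k ≤ (i : ℕ) → D' i = 1 := by
          intro i hi
          have hij : i ≠ jk := Fin.ne_of_val_ne (show (i:ℕ) ≠ k - 1 by omega)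
          rcases eq_or_ne i ik with rfl | hii
          · simp [hD', Function.update_of_ne hij]
          · have hvk : (i : ℕ) ≠ k := fun hc => hii (Fin.ext hc)
            simp only [hD', Function.update_of_ne hij, Function.update_of_ne hii]
            exact hsupp i (by omega)
        rw [key]
        exact conn_mul (IH D' hprod' hsupp') (conn_pair ik jk hne a ha)
    · -- k ≥ n : the support condition is vacuous
      exact IH D hprod (fun i hi => absurd hi (by have := i.isLt; omega))

end SLPathAux

/-- SL_n is 𝔸¹-connected: every matrix of determinant one is connected to the
identity by a polynomial path inside SL_n. -/
theorem sl_n_A1_connected (K : Type*) [Field K] (n : ℕ)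
    (A : Matrix (Fin n) (Fin n) K) (hA : A.det = 1) :
    ∃ M : Matrix (Fin n) (Fin n) (Polynomial K),
      M.det = 1 ∧
      M.map (Polynomial.eval 0) = 1 ∧
      M.map (Polynomial.eval 1) = A := by
  have : SLPathAux.Conn A := by
    apply Matrix.diagonal_transvection_induction SLPathAux.Conn A
    · intro D hD
      apply SLPathAux.conn_diagonal
      rw [Matrix.det_diagonal] at hD
      rw [hD, hA]
    · intro t
      exact SLPathAux.conn_transvection t.i t.j t.hij t.c
    · intro A B hA hB
      exact SLPathAux.conn_mul hA hB
  exact this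
end

section
/- Let K be a field and ℓ, d natural numbers with d+1 ≤ ℓ. Let A be an ℓ×(d+1) matrix with entries in the field of rational functions K(t) such that for every map ρ : Fin(d+1) → Fin(ℓ), the (d+1)×(d+1) minor det(A ∘ ρ) — the determinant of the (d+1)×(d+1) matrix whose (i,j) entry is A(ρ(i), j) — lies in the image of the polynomial ring K[t] inside K(t). Then there exists an ℓ×(d+1) matrix B with entries in K[t] such that for every map ρ : Fin(d+1) → Fin(ℓ), the image in K(t) of the minor det(B ∘ ρ) equals det(A ∘ ρ). -/
open Matrix

lemma aux_exists_minor_ne_zero {E : Type*} [Field E] {ℓ m : ℕ}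
    (N : Matrix (Fin ℓ) (Fin m) E) (h : LinearIndependent E (fun j => Nᵀ j)) :
    ∃ ρ : Fin m → Fin ℓ, (N.submatrix ρ id).det ≠ 0 := by
  classical
  have hrank : N.rank = m := by
    rw [Matrix.rank_eq_finrank_span_cols]
    have := finrank_span_eq_card h
    rw [Fintype.card_fin] at this
    exact this
  have hrows : Module.finrank E (Submodule.span E (Set.range (fun i => N i))) = m := by
    have h1 : Nᵀ.rank = m := by rw [Matrix.rank_transpose]; exact hrank
    rw [Matrix.rank_eq_finrank_span_cols] at h1
    exact h1
  obtain ⟨b, hbs, hbspan, hbind⟩ := exists_linearIndependent E (Set.range (fun i => N i))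
  have hbfin : b.Finite := hbind.setFinite
  haveI : Fintype b := hbfin.fintype
  have hcard : Fintype.card b = m := by
    have h2 : Module.finrank E (Submodule.span E (Set.range ((↑) : b → (Fin m → E)))) =
        Fintype.card b := finrank_span_eq_card hbind
    rw [Subtype.range_coe, hbspan, hrows] at h2
    exact h2.symm
  let e : Fin m ≃ b := (Fintype.equivFinOfCardEq hcard).symm
  have hρ : ∀ i : Fin m, ∃ r : Fin ℓ, N r = (e i : Fin m → E) := fun i => hbs (e i).2
  choose ρ hρ using hρ
  refine ⟨ρ, ?_⟩
  intro hdet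
  obtain ⟨v, hv0, hv⟩ := Matrix.exists_vecMul_eq_zero_iff.mpr hdet
  have hind : LinearIndependent E (fun i : Fin m => (e i : Fin m → E)) :=
    hbind.comp e e.injective
  apply hv0
  funext i
  refine Fintype.linearIndependent_iff.mp hind v ?_ i
  funext j
  have := congrFun hv j
  simpa [Matrix.vecMul, dotProduct, hρ, Finset.sum_apply, mul_comm] using this

lemma aux_det_map {R S : Type*} [CommRing R] [CommRing S] {n : ℕ} (f : R →+* S)
    (M : Matrix (Fin n) (Fin n) R) : (M.map f).det = f M.det :=
  (f.map_det M).symm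

lemma aux_lift {R F : Type*} [CommRing R] [IsDomain R] [IsPrincipalIdealRing R]
    [Field F] [Algebra R F] [IsFractionRing R F] {ℓ d : ℕ}
    (A : Matrix (Fin ℓ) (Fin (d + 1)) F)
    (hA : ∀ ρ : Fin (d + 1) → Fin ℓ, ∃ p : R,
      algebraMap R F p = (A.submatrix ρ id).det) :
    ∃ B : Matrix (Fin ℓ) (Fin (d + 1)) R,
      ∀ ρ : Fin (d + 1) → Fin ℓ,
        algebraMap R F (B.submatrix ρ id).det = (A.submatrix ρ id).det := by
  classical
  have hφinj : Function.Injective (algebraMap R F) := IsFractionRing.injective R F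
  by_cases hind : LinearIndependent F (fun j => Aᵀ j)
  swap
  · -- degenerate case: all minors are zero
    refine ⟨0, fun ρ => ?_⟩
    obtain ⟨g, hg, j₀, hgj₀⟩ := Fintype.not_linearIndependent_iff.mp hind
    have hdet : (A.submatrix ρ id).det = 0 := by
      rw [← Matrix.exists_mulVec_eq_zero_iff]
      refine ⟨g, fun h => hgj₀ (congrFun h j₀), ?_⟩
      funext i
      have := congrFun hg (ρ i)
      simpa [Matrix.mulVec, dotProduct, Finset.sum_apply, mul_comm] using this
    have h0 : ((0 : Matrix (Fin ℓ) (Fin (d+1)) R).submatrix ρ id) = 0 := rfl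
    rw [h0, Matrix.det_zero, map_zero, hdet]
  · -- main case
    set ψ : (Fin ℓ → R) →ₗ[R] (Fin ℓ → F) := (Algebra.linearMap R F).compLeft (Fin ℓ) with hψdef
    have hψ : ∀ (v : Fin ℓ → R) (i : Fin ℓ), ψ v i = algebraMap R F (v i) := fun v i => rfl
    have hψinj : Function.Injective ψ := by
      intro x y hxy
      funext i
      exact hφinj (congrFun hxy i)
    set V : Submodule F (Fin ℓ → F) := Submodule.span F (Set.range Aᵀ) with hVdef
    set M : Submodule R (Fin ℓ → R) := Submodule.comap ψ (V.restrictScalars R) with hMdef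
    obtain ⟨n, w⟩ := Submodule.basisOfPid (Pi.basisFun R (Fin ℓ)) M
    set wv : Fin n → (Fin ℓ → R) := fun k => (w k : Fin ℓ → R) with hwvdef
    have hwvM : ∀ k, wv k ∈ M := fun k => (w k).2
    have indep_wv : LinearIndependent R wv :=
      w.linearIndependent.map' M.subtype (Submodule.ker_subtype M)
    set u : Fin n → (Fin ℓ → F) := fun k => ψ (wv k) with hudef
    have hker : LinearMap.ker ψ = ⊥ := by
      rw [LinearMap.ker_eq_bot]; exact hψinj
    have indepR_u : LinearIndependent R u := indep_wv.map' ψ hker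
    have indepF_u : LinearIndependent F u :=
      (LinearIndependent.iff_fractionRing R F).mp indepR_u
    have huV : ∀ k, u k ∈ V := fun k => hwvM k
    -- expressing members of M in terms of the basis
    have hMrepr : ∀ x (hx : x ∈ M), x = ∑ k, (w.repr ⟨x, hx⟩) k • wv k := by
      intro x hx
      have hrepr : (⟨x, hx⟩ : M) = ∑ k, (w.repr ⟨x, hx⟩) k • w k := (w.sum_repr ⟨x, hx⟩).symm
      have := congrArg (M.subtype) hrepr
      simpa only [hwvdef, map_sum, map_smul, Submodule.subtype_apply] using this
    have hψsum : ∀ (cc : Fin n → R), ψ (∑ k, cc k • wv k) = ∑ k, algebraMap R F (cc k) • u k := by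
      intro cc
      rw [map_sum]
      refine Finset.sum_congr rfl fun k _ => ?_
      rw [LinearMap.map_smul, algebraMap_smul]
    have hMspan : ∀ x ∈ M, ψ x ∈ Submodule.span F (Set.range u) := by
      intro x hx
      rw [hMrepr x hx, hψsum]
      exact Submodule.sum_mem _ fun k _ =>
        Submodule.smul_mem _ _ (Submodule.subset_span ⟨k, rfl⟩)
    -- span F (range u) = V
    have hspan : Submodule.span F (Set.range u) = V := by
      apply le_antisymm
      · rw [Submodule.span_le]
        rintro _ ⟨k, rfl⟩
        exact huV k
      · rw [hVdef, Submodule.span_le]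
        rintro _ ⟨j, rfl⟩
        obtain ⟨b, hb⟩ := IsLocalization.exist_integer_multiples_of_finite
          (nonZeroDivisors R) (fun i : Fin ℓ => A i j)
        choose v hv using hb
        have hbne : algebraMap R F (b : R) ≠ 0 := fun h =>
          nonZeroDivisors.ne_zero b.2 (hφinj (by rw [h, map_zero]))
        have hψv : ψ v = algebraMap R F (b : R) • Aᵀ j := by
          funext i
          rw [hψ, hv i]
          simp [Algebra.smul_def]
        have hvM : v ∈ M := by
          rw [hMdef, Submodule.mem_comap]
          show ψ v ∈ V
          rw [hψv]
          exact Submodule.smul_mem _ _ (Submodule.subset_span ⟨j, rfl⟩)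
        have h1 := hMspan v hvM
        rw [hψv] at h1
        have h2 := Submodule.smul_mem (Submodule.span F (Set.range u))
          (algebraMap R F (b : R))⁻¹ h1
        rwa [smul_smul, inv_mul_cancel₀ hbne, one_smul] at h2
    -- n = d + 1
    have hn : n = d + 1 := by
      have h1 : Module.finrank F (Submodule.span F (Set.range u)) = n := by
        simpa using finrank_span_eq_card indepF_u
      have h2 : Module.finrank F V = d + 1 := by
        rw [hVdef]
        simpa using finrank_span_eq_card hind
      rw [hspan, h2] at h1
      exact h1.symm
    subst hn
    -- the polynomial matrix W and its maximal minors
    set W : Matrix (Fin ℓ) (Fin (d+1)) R := Matrix.of fun i k => wv k i with hWdef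
    set m : (Fin (d+1) → Fin ℓ) → R := fun ρ => (W.submatrix ρ id).det with hmdef
    -- coordinate matrix C
    have hcol : ∀ j, ∃ c : Fin (d+1) → F, ∑ k, c k • u k = Aᵀ j := by
      intro j
      have : Aᵀ j ∈ Submodule.span F (Set.range u) := by
        rw [hspan]; exact Submodule.subset_span ⟨j, rfl⟩
      rw [Submodule.mem_span_range_iff_exists_fun] at this
      exact this
    choose c hc using hcol
    set C : Matrix (Fin (d+1)) (Fin (d+1)) F := Matrix.of fun k j => c j k with hCdef
    have hAWC : A = (W.map (algebraMap R F)) * C := by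
      ext i j
      have h3 := congrFun (hc j) i
      simp only [Finset.sum_apply, Pi.smul_apply, smul_eq_mul] at h3
      rw [Matrix.mul_apply]
      simp only [Matrix.map_apply, hCdef, Matrix.of_apply]
      rw [show A i j = Aᵀ j i from rfl, ← h3]
      refine Finset.sum_congr rfl fun k _ => ?_
      rw [mul_comm]
      rfl
    have hminor : ∀ ρ : Fin (d+1) → Fin ℓ,
        (A.submatrix ρ id).det = algebraMap R F (m ρ) * C.det := by
      intro ρ
      have h1 : A.submatrix ρ id = ((W.map (algebraMap R F)).submatrix ρ id) * C := by
        ext i j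
        rw [hAWC]
        simp [Matrix.mul_apply, Matrix.submatrix_apply]
      rw [h1, Matrix.det_mul, Matrix.submatrix_map, aux_det_map]
    -- some minor of W is nonzero
    have hWcols : LinearIndependent F (fun k => (W.map (algebraMap R F))ᵀ k) := by
      have h4 : (fun k => (W.map (algebraMap R F))ᵀ k) = u := by
        funext k; funext i; rfl
      rwa [h4]
    obtain ⟨ρ₀, hρ₀⟩ := aux_exists_minor_ne_zero (W.map (algebraMap R F)) hWcols
    have hmρ₀ : m ρ₀ ≠ 0 := by
      intro h
      apply hρ₀
      rw [Matrix.submatrix_map, aux_det_map, show (W.submatrix ρ₀ id).det = m ρ₀ from rfl,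
        h, map_zero]
    -- the ideal generated by the minors of W is the whole ring
    have hI : Ideal.span (Set.range m) = ⊤ := by
      by_contra hItop
      obtain ⟨P, hPmax, hIP⟩ := Ideal.exists_le_maximal _ hItop
      obtain ⟨π, hπ''⟩ := Submodule.IsPrincipal.principal P
      have hπ : P = Ideal.span {π} := hπ''
      haveI := hPmax
      letI : Field (R ⧸ P) := Ideal.Quotient.field P
      have hθsurj := Ideal.Quotient.mk_surjective (I := P)
      -- all minors of W mod P vanish, so columns mod P are dependent
      have hNdep : ¬ LinearIndependent (R ⧸ P) (fun k => (W.map (Ideal.Quotient.mk P))ᵀ k) := by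
        intro hcon
        obtain ⟨ρ, hρ⟩ := aux_exists_minor_ne_zero (W.map (Ideal.Quotient.mk P)) hcon
        apply hρ
        rw [Matrix.submatrix_map, aux_det_map]
        exact Ideal.Quotient.eq_zero_iff_mem.mpr (hIP (Ideal.subset_span ⟨ρ, rfl⟩))
      obtain ⟨g, hg, k₀, hk₀⟩ := Fintype.not_linearIndependent_iff.mp hNdep
      choose cc hcc using fun k => hθsurj (g k)
      -- the combination ∑ cc k • wv k has all coordinates in P
      have hxP : ∀ i, (∑ k, cc k • wv k) i ∈ P := by
        intro i
        rw [← Ideal.Quotient.eq_zero_iff_mem]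
        have h0 := congrFun hg i
        simp only [Finset.sum_apply, Pi.smul_apply, smul_eq_mul, Pi.zero_apply] at h0 ⊢
        rw [map_sum]
        rw [← h0]
        refine Finset.sum_congr rfl fun k _ => ?_
        rw [_root_.map_mul, hcc]
        rfl
      have hπ0 : π ≠ 0 := by
        intro h
        have hm : m ρ₀ ∈ P := hIP (Ideal.subset_span ⟨ρ₀, rfl⟩)
        rw [hπ, h] at hm
        exact hmρ₀ (zero_dvd_iff.mp (Ideal.mem_span_singleton.mp hm))
      have hdvd : ∀ i, ∃ t, (∑ k, cc k • wv k) i = π * t := by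
        intro i
        have := hxP i
        rw [hπ, Ideal.mem_span_singleton] at this
        obtain ⟨t, ht⟩ := this
        exact ⟨t, ht⟩
      choose t ht using hdvd
      have hπF : algebraMap R F π ≠ 0 := fun h =>
        hπ0 (hφinj (by rw [h, map_zero]))
      have htM : t ∈ M := by
        rw [hMdef, Submodule.mem_comap]
        show ψ t ∈ V
        have hsmul : algebraMap R F π • ψ t = ψ (∑ k, cc k • wv k) := by
          funext i
          rw [Pi.smul_apply, hψ, hψ, ht i, _root_.map_mul]
          rfl
        have hmem : ψ (∑ k, cc k • wv k) ∈ V := by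
          rw [hψsum]
          exact Submodule.sum_mem _ fun k _ => Submodule.smul_mem _ _ (huV k)
        have h5 := Submodule.smul_mem V (algebraMap R F π)⁻¹ (hsmul ▸ hmem)
        rwa [smul_smul, inv_mul_cancel₀ hπF, one_smul] at h5
      -- express t in the basis and conclude cc k divisible by π
      set bb : Fin (d+1) → R := fun k => (w.repr ⟨t, htM⟩) k with hbbdef
      have htrepr : t = ∑ k, bb k • wv k := hMrepr t htM
      have hsumt : ∑ k, cc k • wv k = π • t := funext fun i => ht i
      have h7 : π • t = ∑ k, (π * bb k) • wv k := by
        rw [htrepr, Finset.smul_sum]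
        simp only [smul_smul]
      have hzero : ∑ k, (cc k - π * bb k) • wv k = 0 := by
        rw [Finset.sum_congr rfl fun k _ => sub_smul (cc k) (π * bb k) (wv k),
          Finset.sum_sub_distrib, hsumt, h7, sub_self]
      have hccπ : ∀ k, cc k - π * bb k = 0 :=
        Fintype.linearIndependent_iff.mp indep_wv _ hzero
      apply hk₀
      rw [← hcc k₀]
      have : cc k₀ = π * bb k₀ := sub_eq_zero.mp (hccπ k₀)
      rw [this, _root_.map_mul]
      have : (Ideal.Quotient.mk P) π = 0 := Ideal.Quotient.eq_zero_iff_mem.mpr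
        (hπ ▸ Ideal.subset_span rfl)
      rw [this, zero_mul]
    -- \sum a ρ • m ρ = 1
    have h1I : (1 : R) ∈ Submodule.span R (Set.range m) := by
      have := (Ideal.eq_top_iff_one _).mp hI
      exact this
    rw [Submodule.mem_span_range_iff_exists_fun] at h1I
    obtain ⟨a, ha⟩ := h1I
    choose p hp using hA
    have hq : algebraMap R F (∑ ρ, a ρ * p ρ) = C.det := by
      rw [map_sum]
      have step : ∀ ρ : Fin (d+1) → Fin ℓ, algebraMap R F (a ρ * p ρ)
          = algebraMap R F (a ρ * m ρ) * C.det := by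
        intro ρ
        rw [_root_.map_mul, hp, hminor, _root_.map_mul, mul_assoc]
      rw [Finset.sum_congr rfl fun ρ _ => step ρ, ← Finset.sum_mul, ← map_sum]
      have : ∑ ρ, a ρ * m ρ = 1 := by simpa [smul_eq_mul] using ha
      rw [this, _root_.map_one, one_mul]
    set q : R := ∑ ρ, a ρ * p ρ with hqdef
    refine ⟨W.updateCol 0 (fun i => q * W i 0), fun ρ => ?_⟩
    have hsub : (W.updateCol 0 (fun i => q * W i 0)).submatrix ρ id
        = (W.submatrix ρ id).updateCol 0 (fun i => q * W (ρ i) 0) := by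
      ext i k
      simp [Matrix.submatrix_apply, Matrix.updateCol_apply]
    have hdetB : ((W.submatrix ρ id).updateCol 0 (fun i => q * W (ρ i) 0)).det = q * m ρ := by
      have hcoleq : (fun i => q * W (ρ i) 0) = q • (fun i => (W.submatrix ρ id) i 0) := by
        funext i
        simp [Matrix.submatrix_apply, smul_eq_mul]
      rw [hcoleq, Matrix.det_updateCol_smul]
      congr 1
      rw [show (fun i => (W.submatrix ρ id) i 0) = fun i => (W.submatrix ρ id) i 0 from rfl]
      exact congrArg Matrix.det (Matrix.updateCol_eq_self _ _)
    rw [hsub, hdetB, _root_.map_mul, hq, hminor, mul_comm]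

/-- Lifting lemma (matrix form): a matrix over K(t) all of whose maximal minors
are polynomials has the same maximal minors as some matrix over K[t]. -/
theorem lift_decomposable_multivector (K : Type*) [Field K] (ℓ d : ℕ) (hd : d + 1 ≤ ℓ)
    (A : Matrix (Fin ℓ) (Fin (d + 1)) (RatFunc K))
    (hA : ∀ ρ : Fin (d + 1) → Fin ℓ, ∃ p : Polynomial K,
      algebraMap (Polynomial K) (RatFunc K) p = (A.submatrix ρ id).det) :
    ∃ B : Matrix (Fin ℓ) (Fin (d + 1)) (Polynomial K),
      ∀ ρ : Fin (d + 1) → Fin ℓ,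
        algebraMap (Polynomial K) (RatFunc K) (B.submatrix ρ id).det
          = (A.submatrix ρ id).det := by
  exact aux_lift A hA
end

section
/- Let K be a field, c and d natural numbers, Q an invertible symmetric d×d matrix over K, and M(i,j) a family of d×d matrices over K indexed by i, j ∈ Fin c, satisfying: (a) Q·M(i,j) = (M(i,j))ᵀ·Q for all i, j; and (b) M(i,j)·M(i',j') + M(i,j')·M(i',j) = M(i',j)·M(i,j') + M(i',j')·M(i,j) for all i, i', j, j'. Then the matrix Γ·Q⁻¹ is symmetric, where Γ = Σ_{τ ∈ Perm(Fin c)} sign(τ) · M(τ(0),0)·M(τ(1),1)⋯M(τ(c−1),c−1), the product being taken in increasing order of the second index. -/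
open Matrix

section KoszulAux

variable {K : Type*} [Field K] {c d : ℕ}

/-- The alternating sum of products of `M (τ j) j` over a list of column indices. -/
def kosT (M : Fin c → Fin c → Matrix (Fin d) (Fin d) K) (l : List (Fin c)) :
    Matrix (Fin d) (Fin d) K :=
  ∑ τ : Equiv.Perm (Fin c),
    (((Equiv.Perm.sign τ : ℤˣ) : ℤ) : K) • (l.map fun j => M (τ j) j).prod

lemma kosT_swap (M : Fin c → Fin c → Matrix (Fin d) (Fin d) K)
    (hcomm : ∀ i i' j j',
      M i j * M i' j' + M i j' * M i' j = M i' j * M i j' + M i' j' * M i j)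
    (p s : List (Fin c)) (a b : Fin c)
    (hnd : (p ++ a :: b :: s).Nodup) :
    kosT M (p ++ a :: b :: s) = kosT M (p ++ b :: a :: s) := by
  rcases eq_or_ne a b with rfl | hab
  · rfl
  simp only [List.nodup_append, List.nodup_cons, List.mem_cons,
    List.disjoint_cons_right] at hnd
  obtain ⟨-, ⟨h2, h3, -⟩, hdis⟩ := hnd
  have h5 : a ∉ p := fun hp => hdis a hp a (Or.inl rfl) rfl
  have h6 : b ∉ p := fun hp => hdis b hp b (Or.inr (Or.inl rfl)) rfl
  have has : a ∉ s := fun h => h2 (Or.inr h)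
  rw [← sub_eq_zero, kosT, kosT, ← Finset.sum_sub_distrib]
  refine Finset.sum_ninvolution (fun τ => τ * Equiv.swap a b) ?_ ?_
    (fun _ => Finset.mem_univ _) ?_
  · intro τ
    have hP : (p.map fun j => M (τ ((Equiv.swap a b) j)) j) = p.map fun j => M (τ j) j := by
      refine List.map_congr_left fun j hj => ?_
      rw [Equiv.swap_apply_of_ne_of_ne
        (fun h => h5 (by rw [← h]; exact hj)) (fun h => h6 (by rw [← h]; exact hj))]
    have hS : (s.map fun j => M (τ ((Equiv.swap a b) j)) j) = s.map fun j => M (τ j) j := by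
      refine List.map_congr_left fun j hj => ?_
      rw [Equiv.swap_apply_of_ne_of_ne
        (fun h => has (by rw [← h]; exact hj)) (fun h => h3 (by rw [← h]; exact hj))]
    have hsign : (((Equiv.Perm.sign (τ * Equiv.swap a b) : ℤˣ) : ℤ) : K)
        = -(((Equiv.Perm.sign τ : ℤˣ) : ℤ) : K) := by
      rw [Equiv.Perm.sign_mul, Equiv.Perm.sign_swap hab]
      push_cast
      ring
    simp only [List.map_append, List.prod_append, List.map_cons, List.prod_cons,
      hP, hS, hsign, Equiv.Perm.mul_apply, Equiv.swap_apply_left, Equiv.swap_apply_right]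
    set ε : K := (((Equiv.Perm.sign τ : ℤˣ) : ℤ) : K) with hε
    set P : Matrix (Fin d) (Fin d) K := (p.map fun j => M (τ j) j).prod with hPdef
    set S : Matrix (Fin d) (Fin d) K := (s.map fun j => M (τ j) j).prod with hSdef
    set A := M (τ a) a
    set B := M (τ b) b
    set C := M (τ b) a
    set D := M (τ a) b
    have key : A * B + D * C - (C * D + B * A) = 0 :=
      sub_eq_zero.mpr (hcomm (τ a) (τ b) a b)
    have hsm : ∀ X : Matrix (Fin d) (Fin d) K,
        ε • X = (ε • (1 : Matrix (Fin d) (Fin d) K)) * X := fun X => by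
      rw [smul_mul_assoc, one_mul]
    set E : Matrix (Fin d) (Fin d) K := ε • (1 : Matrix (Fin d) (Fin d) K) with hE
    rw [neg_smul, neg_smul, hsm, hsm, hsm, hsm]
    have expand : E * (P * (A * (B * S))) - E * (P * (B * (A * S)))
        + (-(E * (P * (C * (D * S)))) - -(E * (P * (D * (C * S)))))
        = E * P * ((A * B + D * C - (C * D + B * A)) * S) := by noncomm_ring
    rw [expand, key, zero_mul, mul_zero]
  · intro τ _ h
    apply hab
    have h1 : Equiv.swap a b = 1 := mul_left_cancel (a := τ) (by rw [mul_one]; exact h)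
    exact Equiv.swap_eq_one_iff.mp h1
  · intro τ
    show τ * Equiv.swap a b * Equiv.swap a b = τ
    rw [mul_assoc, Equiv.swap_mul_self, mul_one]

lemma kosT_perm (M : Fin c → Fin c → Matrix (Fin d) (Fin d) K)
    (hcomm : ∀ i i' j j',
      M i j * M i' j' + M i j' * M i' j = M i' j * M i j' + M i' j' * M i j)
    {l l' : List (Fin c)} (h : l.Perm l') :
    ∀ p : List (Fin c), (p ++ l).Nodup → kosT M (p ++ l) = kosT M (p ++ l') := by
  induction h with
  | nil => intro p _; rfl
  | cons x h ih =>
    intro p hnd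
    have := ih (p ++ [x]) (by simpa [List.append_assoc] using hnd)
    simpa [List.append_assoc] using this
  | swap x y l =>
    intro p hnd
    exact kosT_swap M hcomm p l y x hnd
  | trans h1 h2 ih1 ih2 =>
    intro p hnd
    rw [ih1 p hnd, ih2 p (((h1.append_left p).nodup_iff).mp hnd)]

lemma inv_mul_transpose_prod (Q : Matrix (Fin d) (Fin d) K) (hQinv : IsUnit Q.det)
    (l : List (Matrix (Fin d) (Fin d) K)) (h : ∀ A ∈ l, Q * A = Aᵀ * Q) :
    Q⁻¹ * (l.map Matrix.transpose).prod = l.prod * Q⁻¹ := by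
  induction l with
  | nil => simp
  | cons A l ih =>
    simp only [List.map_cons, List.prod_cons]
    have hA : Q⁻¹ * Aᵀ = A * Q⁻¹ := by
      have h1 := h A List.mem_cons_self
      calc Q⁻¹ * Aᵀ = Q⁻¹ * Aᵀ * (Q * Q⁻¹) := by
            rw [Matrix.mul_nonsing_inv Q hQinv, mul_one]
        _ = Q⁻¹ * (Aᵀ * Q) * Q⁻¹ := by noncomm_ring
        _ = Q⁻¹ * (Q * A) * Q⁻¹ := by rw [h1]
        _ = (Q⁻¹ * Q) * (A * Q⁻¹) := by noncomm_ring
        _ = A * Q⁻¹ := by rw [Matrix.nonsing_inv_mul Q hQinv, one_mul]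
    rw [← mul_assoc, hA, mul_assoc, ih (fun B hB => h B (List.mem_cons_of_mem _ hB)),
      ← mul_assoc]

end KoszulAux

/-- Symmetry of the Koszul-type matrix Γ·Q⁻¹ built from a family of matrices
M(i,j) satisfying Q-self-adjointness and the polarized commutativity relation. -/
theorem koszul_matrix_symmetric (K : Type*) [Field K] (c d : ℕ)
    (Q : Matrix (Fin d) (Fin d) K) (hQsymm : Qᵀ = Q) (hQinv : IsUnit Q.det)
    (M : Fin c → Fin c → Matrix (Fin d) (Fin d) K)
    (hadj : ∀ i j, Q * M i j = (M i j)ᵀ * Q)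
    (hcomm : ∀ i i' j j',
      M i j * M i' j' + M i j' * M i' j = M i' j * M i j' + M i' j' * M i j) :
    ((∑ τ : Equiv.Perm (Fin c),
        (((Equiv.Perm.sign τ : ℤˣ) : ℤ) : K) • (List.ofFn fun j => M (τ j) j).prod)
      * Q⁻¹)ᵀ
    = (∑ τ : Equiv.Perm (Fin c),
        (((Equiv.Perm.sign τ : ℤˣ) : ℤ) : K) • (List.ofFn fun j => M (τ j) j).prod)
      * Q⁻¹ := by
  classical
  simp only [List.ofFn_eq_map]
  show (kosT M (List.finRange c) * Q⁻¹)ᵀ = kosT M (List.finRange c) * Q⁻¹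
  rw [Matrix.transpose_mul, Matrix.transpose_nonsing_inv, hQsymm]
  have key : Q⁻¹ * (kosT M (List.finRange c))ᵀ
      = kosT M (List.finRange c).reverse * Q⁻¹ := by
    unfold kosT
    rw [Matrix.transpose_sum, Finset.mul_sum, Finset.sum_mul]
    refine Finset.sum_congr rfl fun τ _ => ?_
    rw [Matrix.transpose_smul, mul_smul_comm, smul_mul_assoc]
    congr 1
    rw [Matrix.transpose_list_prod]
    have hrev : (((List.finRange c).map fun j => M (τ j) j).map Matrix.transpose).reverse
        = ((List.finRange c).reverse.map fun j => M (τ j) j).map Matrix.transpose := by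
      rw [← List.map_reverse, ← List.map_reverse]
    rw [hrev]
    refine inv_mul_transpose_prod Q hQinv _ fun A hA => ?_
    simp only [List.mem_map, List.mem_reverse, List.mem_finRange, true_and] at hA
    obtain ⟨j, rfl⟩ := hA
    exact hadj _ _
  rw [key]
  congr 1
  exact kosT_perm M hcomm ((List.finRange c).reverse_perm) []
    (by simpa using List.nodup_reverse.mpr (List.nodup_finRange c))
end

section
/- Let K be a field and a, b, c ∈ K nonzero elements. Then there exist h₀, h₁, h₂, h₃, h₄ ∈ K and an invertible 3×3 matrix P over K such that Pᵀ·H·P is the diagonal matrix diag(a, b, c), where H is the 3×3 Hankel matrix with H(i,j) = h_{i+j} for 0 ≤ i, j ≤ 2. In particular, H has nonzero determinant. -/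
open Matrix

/-- For any nonzero a, b, c ∈ K there is a nonsingular 3×3 Hankel matrix that is
congruent over K to diag(a, b, c). -/
theorem hankel_realizes_diagonal (K : Type*) [Field K] (a b c : K)
    (ha : a ≠ 0) (hb : b ≠ 0) (hc : c ≠ 0) :
    ∃ h₀ h₁ h₂ h₃ h₄ : K, ∃ P : Matrix (Fin 3) (Fin 3) K,
      IsUnit P.det ∧
      Pᵀ * !![h₀, h₁, h₂; h₁, h₂, h₃; h₂, h₃, h₄] * P = Matrix.diagonal ![a, b, c] ∧
      (!![h₀, h₁, h₂; h₁, h₂, h₃; h₂, h₃, h₄]).det ≠ 0 := by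
  refine ⟨a + b^2/c, 0, b, 0, c, !![1,0,0; 0,1,0; -(b/c),0,1], ?_, ?_, ?_⟩
  · rw [det_fin_three]
    simp
  · ext i j
    fin_cases i <;> fin_cases j <;>
      simp [Matrix.mul_apply, Fin.sum_univ_three, Matrix.diagonal, Matrix.transpose_apply,
        Matrix.vecHead, Matrix.vecTail] <;>
      field_simp <;> ring
  · rw [det_fin_three]
    intro h
    apply mul_ne_zero (mul_ne_zero ha hb) hc
    simp at h
    field_simp at h
    linear_combination h
end

section
/- Let K be a field and h₀, h₁, h₂, h₃, h₄ ∈ K such that the 3×3 Hankel matrix H with H(i,j) = h_{i+j} for 0 ≤ i, j ≤ 2 has nonzero determinant. Then there exist polynomials f, g ∈ K[t] such that: f is monic of degree 3; g has degree at most 2; f and g are coprime; and the polynomial g·t⁵ − (h₀t⁴ + h₁t³ + h₂t² + h₃t + h₄)·f has degree at most 2 (equivalently, the expansion of g/f in powers of t⁻¹ begins h₀t⁻¹ + h₁t⁻² + h₂t⁻³ + h₃t⁻⁴ + h₄t⁻⁵ + O(t⁻⁶)). -/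
open Polynomial

private lemma hankel_aux (K : Type*) [Field K] (h₀ h₁ h₂ h₃ h₄ a b c u0 u1 v0 v1 v2 : K)
    (E1 : h₀ * c + h₁ * b + h₂ * a + h₃ = 0)
    (E2 : h₁ * c + h₂ * b + h₃ * a + h₄ = 0)
    (E3 : h₂ * c + h₃ * b + h₄ * a = 0)
    (B0 : u0 * c + v0 * (h₂ + a * h₁ + b * h₀) = 1)
    (B1 : u0 * b + u1 * c + v0 * (h₁ + a * h₀) + v1 * (h₂ + a * h₁ + b * h₀) = 0)
    (B2 : u0 * a + u1 * b + v0 * h₀ + v1 * (h₁ + a * h₀) + v2 * (h₂ + a * h₁ + b * h₀) = 0)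
    (B3 : u0 + u1 * a + v1 * h₀ + v2 * (h₁ + a * h₀) = 0)
    (B4 : u1 + v2 * h₀ = 0) :
    ∃ f g : Polynomial K,
      f.Monic ∧ f.natDegree = 3 ∧ g.degree ≤ 2 ∧ IsCoprime f g ∧
      (g * X ^ 5
        - (C h₀ * X ^ 4 + C h₁ * X ^ 3 + C h₂ * X ^ 2 + C h₃ * X + C h₄) * f).degree
        ≤ 2 := by
  set f : K[X] := X ^ 3 + (C a * X ^ 2 + C b * X + C c) with hf
  set g : K[X] := C h₀ * X ^ 2 + (C h₁ + C a * C h₀) * X + (C h₂ + C a * C h₁ + C b * C h₀)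
    with hg
  have hg2 : g = C h₀ * X ^ 2 + C (h₁ + a * h₀) * X + C (h₂ + a * h₁ + b * h₀) := by
    rw [hg]; simp only [map_add, map_mul]
  have hdq : (C a * X ^ 2 + C b * X + C c : K[X]).degree < (3 : ℕ) :=
    lt_of_le_of_lt degree_quadratic_le (by norm_num)
  have hmon : f.Monic := monic_X_pow_add hdq
  have hfdeg : f.degree = 3 := by
    rw [hf, degree_add_eq_left_of_degree_lt (by rwa [degree_X_pow]), degree_X_pow]
    norm_cast
  have hfnat : f.natDegree = 3 := natDegree_eq_of_degree_eq_some hfdeg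
  -- lifted scalar identities
  have E1C : C h₀ * C c + C h₁ * C b + C h₂ * C a + C h₃ = (0 : K[X]) := by
    simpa only [map_add, map_mul, map_zero] using congrArg (C : K → K[X]) E1
  have E2C : C h₁ * C c + C h₂ * C b + C h₃ * C a + C h₄ = (0 : K[X]) := by
    simpa only [map_add, map_mul, map_zero] using congrArg (C : K → K[X]) E2
  have E3C : C h₂ * C c + C h₃ * C b + C h₄ * C a = (0 : K[X]) := by
    simpa only [map_add, map_mul, map_zero] using congrArg (C : K → K[X]) E3
  have B0C : C u0 * C c + C v0 * (C h₂ + C a * C h₁ + C b * C h₀) = (1 : K[X]) := by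
    simpa only [map_add, map_mul, map_one] using congrArg (C : K → K[X]) B0
  have B1C : C u0 * C b + C u1 * C c + C v0 * (C h₁ + C a * C h₀)
      + C v1 * (C h₂ + C a * C h₁ + C b * C h₀) = (0 : K[X]) := by
    simpa only [map_add, map_mul, map_zero] using congrArg (C : K → K[X]) B1
  have B2C : C u0 * C a + C u1 * C b + C v0 * C h₀ + C v1 * (C h₁ + C a * C h₀)
      + C v2 * (C h₂ + C a * C h₁ + C b * C h₀) = (0 : K[X]) := by
    simpa only [map_add, map_mul, map_zero] using congrArg (C : K → K[X]) B2
  have B3C : C u0 + C u1 * C a + C v1 * C h₀ + C v2 * (C h₁ + C a * C h₀) = (0 : K[X]) := by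
    simpa only [map_add, map_mul, map_zero] using congrArg (C : K → K[X]) B3
  have B4C : C u1 + C v2 * C h₀ = (0 : K[X]) := by
    simpa only [map_add, map_mul, map_zero] using congrArg (C : K → K[X]) B4
  refine ⟨f, g, hmon, hfnat, ?_, ?_, ?_⟩
  · rw [hg2]; exact degree_quadratic_le
  · refine ⟨C u1 * X + C u0, C v2 * X ^ 2 + C v1 * X + C v0, ?_⟩
    rw [hf, hg]
    linear_combination (norm := ring1) B0C + (X : K[X]) * B1C + (X : K[X]) ^ 2 * B2C
      + (X : K[X]) ^ 3 * B3C + (X : K[X]) ^ 4 * B4C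
  · have key : g * X ^ 5
        - (C h₀ * X ^ 4 + C h₁ * X ^ 3 + C h₂ * X ^ 2 + C h₃ * X + C h₄) * f
        = C (-(h₃ * c + h₄ * b)) * X + C (-(h₄ * c)) := by
      have hr1 : (C (-(h₃ * c + h₄ * b)) : K[X]) = -(C h₃ * C c + C h₄ * C b) := by
        simp only [map_neg, map_add, map_mul]
      have hr0 : (C (-(h₄ * c)) : K[X]) = -(C h₄ * C c) := by
        simp only [map_neg, map_mul]
      rw [hf, hg, hr1, hr0]
      linear_combination (norm := ring1) (-(X : K[X]) ^ 4) * E1C - (X : K[X]) ^ 3 * E2C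
        - (X : K[X]) ^ 2 * E3C
    rw [key]
    exact le_trans degree_linear_le (by norm_num)

set_option maxHeartbeats 1600000 in
/-- Surjectivity of the Hankel map: any tuple (h₀,…,h₄) whose 3×3 Hankel matrix is
nonsingular arises as the first five t⁻¹-expansion coefficients of a pointed
degree-3 rational function g/f. -/
theorem hankel_from_rational_function (K : Type*) [Field K] (h₀ h₁ h₂ h₃ h₄ : K)
    (hH : (!![h₀, h₁, h₂; h₁, h₂, h₃; h₂, h₃, h₄]).det ≠ 0) :
    ∃ f g : Polynomial K,
      f.Monic ∧ f.natDegree = 3 ∧ g.degree ≤ 2 ∧ IsCoprime f g ∧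
      (g * X ^ 5
        - (C h₀ * X ^ 4 + C h₁ * X ^ 3 + C h₂ * X ^ 2 + C h₃ * X + C h₄) * f).degree
        ≤ 2 := by
  simp [Matrix.det_fin_three] at hH
  have hD : h₀ * h₂ * h₄ - h₀ * h₃ ^ 2 - h₁ ^ 2 * h₄ + 2 * h₁ * h₂ * h₃ - h₂ ^ 3 ≠ 0 := by
    intro h; exact hH (by linear_combination h)
  refine hankel_aux K h₀ h₁ h₂ h₃ h₄
    ((h₂ ^ 2 * h₃ - h₁ * h₃ ^ 2 - h₁ * h₂ * h₄ + h₀ * h₃ * h₄) / (h₀ * h₂ * h₄ - h₀ * h₃ ^ 2 - h₁ ^ 2 * h₄ + 2 * h₁ * h₂ * h₃ - h₂ ^ 3))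
    ((-(h₂ * h₃ ^ 2) + h₂ ^ 2 * h₄ + h₁ * h₃ * h₄ - h₀ * h₄ ^ 2) / (h₀ * h₂ * h₄ - h₀ * h₃ ^ 2 - h₁ ^ 2 * h₄ + 2 * h₁ * h₂ * h₃ - h₂ ^ 3))
    ((h₃ ^ 3 - 2 * h₂ * h₃ * h₄ + h₁ * h₄ ^ 2) / (h₀ * h₂ * h₄ - h₀ * h₃ ^ 2 - h₁ ^ 2 * h₄ + 2 * h₁ * h₂ * h₃ - h₂ ^ 3))
    ((h₁ ^ 3 - 2 * h₀ * h₁ * h₂ + h₀ ^ 2 * h₃) / (h₀ * h₂ * h₄ - h₀ * h₃ ^ 2 - h₁ ^ 2 * h₄ + 2 * h₁ * h₂ * h₃ - h₂ ^ 3))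
    ((h₀ * h₁ ^ 2 - h₀ ^ 2 * h₂) / (h₀ * h₂ * h₄ - h₀ * h₃ ^ 2 - h₁ ^ 2 * h₄ + 2 * h₁ * h₂ * h₃ - h₂ ^ 3))
    ((h₁ * h₃ - h₂ ^ 2) / (h₀ * h₂ * h₄ - h₀ * h₃ ^ 2 - h₁ ^ 2 * h₄ + 2 * h₁ * h₂ * h₃ - h₂ ^ 3))
    ((h₁ * h₂ - h₀ * h₃) / (h₀ * h₂ * h₄ - h₀ * h₃ ^ 2 - h₁ ^ 2 * h₄ + 2 * h₁ * h₂ * h₃ - h₂ ^ 3))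
    ((h₀ * h₂ - h₁ ^ 2) / (h₀ * h₂ * h₄ - h₀ * h₃ ^ 2 - h₁ ^ 2 * h₄ + 2 * h₁ * h₂ * h₃ - h₂ ^ 3))
    ?_ ?_ ?_ ?_ ?_ ?_ ?_ ?_ <;>
  · obtain ⟨D, hDdef⟩ : ∃ D, D = h₀ * h₂ * h₄ - h₀ * h₃ ^ 2 - h₁ ^ 2 * h₄ + 2 * h₁ * h₂ * h₃ - h₂ ^ 3 :=
      ⟨_, rfl⟩
    rw [← hDdef] at hD ⊢
    field_simp
    subst hDdef
    ring
end

section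
/- Let K be a field, ℓ and d natural numbers with d+1 ≤ ℓ, and let A and B be ℓ×(d+1) matrices over K such that: (a) there exists a map ρ₀ : Fin(d+1) → Fin(ℓ) with det(A.submatrix ρ₀ id) ≠ 0, i.e. A has rank d+1; and (b) for every map ρ : Fin(d+1) → Fin(ℓ), det(A.submatrix ρ id) = det(B.submatrix ρ id). Then there exists a (d+1)×(d+1) matrix T over K with det T = 1 such that B = A·T. -/
open Matrix

/-- Multiplying a row vector by the adjugate computes determinants of row
replacements (row version of Cramer's rule). -/
lemma vecMul_adjugate_apply {n : Type*} [DecidableEq n] [Fintype n] {K : Type*} [CommRing K]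
    (M : Matrix n n K) (v : n → K) (j : n) :
    (v ᵥ* M.adjugate) j = (M.updateRow j v).det := by
  rw [← Matrix.cramer_transpose_apply, Matrix.cramer_eq_adjugate_mulVec,
    ← Matrix.adjugate_transpose, Matrix.mulVec_transpose]

/-- Two full-rank ℓ×(d+1) matrices with the same maximal minors differ by a
matrix of determinant one: the fibers of the wedge map over a nonzero
decomposable multivector are SL_{d+1}(K)-orbits. -/
theorem same_minors_SL_orbit (K : Type*) [Field K] (ℓ d : ℕ) (hd : d + 1 ≤ ℓ)
    (A B : Matrix (Fin ℓ) (Fin (d + 1)) K)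
    (hrank : ∃ ρ₀ : Fin (d + 1) → Fin ℓ, (A.submatrix ρ₀ id).det ≠ 0)
    (hminors : ∀ ρ : Fin (d + 1) → Fin ℓ,
      (A.submatrix ρ id).det = (B.submatrix ρ id).det) :
    ∃ T : Matrix (Fin (d + 1)) (Fin (d + 1)) K, T.det = 1 ∧ B = A * T := by
  obtain ⟨ρ₀, hM⟩ := hrank
  set M := A.submatrix ρ₀ id with hMdef
  set B₀ := B.submatrix ρ₀ id with hB₀def
  have hB₀det : B₀.det = M.det := (hminors ρ₀).symm
  have hB₀ : B₀.det ≠ 0 := hB₀det ▸ hM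
  -- submatrix with an updated row-selection equals a row update of the submatrix
  have hupd : ∀ (C : Matrix (Fin ℓ) (Fin (d + 1)) K) (i : Fin ℓ) (j : Fin (d + 1)),
      (C.submatrix ρ₀ id).updateRow j (C i) = C.submatrix (Function.update ρ₀ j i) id := by
    intro C i j
    ext k l
    by_cases hk : k = j
    · subst hk; simp
    · simp [Matrix.updateRow_ne hk, Function.update_of_ne hk]
  -- the key identity : A * M⁻¹ = B * B₀⁻¹
  have key : A * M⁻¹ = B * B₀⁻¹ := by
    ext i j
    rw [Matrix.inv_def, Matrix.inv_def, Matrix.mul_smul, Matrix.mul_smul]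
    have hA : (A * M.adjugate) i j = (A.submatrix (Function.update ρ₀ j i) id).det := by
      have : (A * M.adjugate) i j = ((A i) ᵥ* M.adjugate) j := by
        simp [Matrix.mul_apply, Matrix.vecMul, dotProduct]
      rw [this, vecMul_adjugate_apply, hMdef, hupd]
    have hB : (B * B₀.adjugate) i j = (B.submatrix (Function.update ρ₀ j i) id).det := by
      have : (B * B₀.adjugate) i j = ((B i) ᵥ* B₀.adjugate) j := by
        simp [Matrix.mul_apply, Matrix.vecMul, dotProduct]
      rw [this, vecMul_adjugate_apply, hB₀def, hupd]
    simp only [Matrix.smul_apply, smul_eq_mul]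
    rw [hA, hB, hB₀det, hminors (Function.update ρ₀ j i)]
  refine ⟨M⁻¹ * B₀, ?_, ?_⟩
  · rw [Matrix.det_mul, Matrix.det_nonsing_inv, hB₀det,
      Ring.inverse_eq_inv', inv_mul_cancel₀ hM]
  · calc B = B * (B₀⁻¹ * B₀) := by
          rw [Matrix.nonsing_inv_mul B₀ (isUnit_iff_ne_zero.mpr hB₀), Matrix.mul_one]
      _ = (B * B₀⁻¹) * B₀ := by rw [Matrix.mul_assoc]
      _ = (A * M⁻¹) * B₀ := by rw [key]
      _ = A * (M⁻¹ * B₀) := by rw [Matrix.mul_assoc]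
end

section
/- Let K be a field, n ≥ 1 a natural number, and A, A' invertible n×n matrices over K. The following are equivalent: (i) there exist a nonzero λ ∈ K and an n×n matrix M with entries in the polynomial ring K[t] whose determinant is a nonzero constant polynomial, such that evaluating every entry of M at t = 0 gives A and evaluating every entry of M at t = 1 gives λ·A'; (ii) there exists a nonzero μ ∈ K with det A = μⁿ · det A'. -/
open Polynomial

namespace IsotopyAux

variable {K : Type*} [Field K] {n : ℕ}

/-- A matrix `B` is "polynomially isotopic to the identity" if there is a matrix of
polynomials with determinant identically `1` joining `1` (at `t = 0`) to `B` (at `t = 1`). -/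
def SPath (B : Matrix (Fin n) (Fin n) K) : Prop :=
  ∃ M : Matrix (Fin n) (Fin n) (Polynomial K),
    M.det = 1 ∧ M.map (Polynomial.eval 0) = 1 ∧ M.map (Polynomial.eval 1) = B

lemma SPath_one : SPath (1 : Matrix (Fin n) (Fin n) K) :=
  ⟨1, by simp, by simp [Matrix.map_one], by simp [Matrix.map_one]⟩

lemma SPath_mul {B B' : Matrix (Fin n) (Fin n) K} (h : SPath B) (h' : SPath B') :
    SPath (B * B') := by
  obtain ⟨M, hd, h0, h1⟩ := h
  obtain ⟨M', hd', h0', h1'⟩ := h'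
  refine ⟨M * M', by simp [Matrix.det_mul, hd, hd'], ?_, ?_⟩
  · rw [show ((Polynomial.eval 0 : Polynomial K → K)) =
        (Polynomial.evalRingHom 0 : Polynomial K →+* K) from rfl, Matrix.map_mul]
    simp_all
  · rw [show ((Polynomial.eval 1 : Polynomial K → K)) =
        (Polynomial.evalRingHom 1 : Polynomial K →+* K) from rfl, Matrix.map_mul]
    simp_all

lemma map_transvection {R S : Type*} [CommRing R] [CommRing S] (f : R →+* S)
    (i j : Fin n) (c : R) :
    (Matrix.transvection i j c).map f = Matrix.transvection i j (f c) := by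
  ext a b
  simp [Matrix.transvection, Matrix.single, Matrix.one_apply, apply_ite f]

lemma SPath_transvection (i j : Fin n) (hij : i ≠ j) (c : K) :
    SPath (Matrix.transvection i j c) := by
  refine ⟨Matrix.transvection i j (Polynomial.C c * Polynomial.X),
    by simp [Matrix.det_transvection_of_ne _ _ hij], ?_, ?_⟩
  · rw [show ((Polynomial.eval 0 : Polynomial K → K)) =
        (Polynomial.evalRingHom 0 : Polynomial K →+* K) from rfl, map_transvection]
    simp
  · rw [show ((Polynomial.eval 1 : Polynomial K → K)) =
        (Polynomial.evalRingHom 1 : Polynomial K →+* K) from rfl, map_transvection]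
    simp

set_option linter.unusedTactic false in
lemma pair_ident (i j : Fin n) (hij : i ≠ j) (a : K) (ha : a ≠ 0) :
    Matrix.transvection j i 1 * Matrix.transvection i j (a⁻¹ - 1) *
      Matrix.transvection j i (-a) * Matrix.transvection i j (a⁻¹ - a⁻¹ * a⁻¹) =
    Matrix.diagonal (fun m => if m = i then a else if m = j then a⁻¹ else 1) := by
  have hji := hij.symm
  ext r s
  rw [Matrix.mul_assoc, Matrix.mul_assoc]
  rcases eq_or_ne r i with hri | hri
  · subst hri
    rw [Matrix.transvection_mul_apply_of_ne _ _ _ _ hij,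
      Matrix.transvection_mul_apply_same,
      Matrix.transvection_mul_apply_of_ne _ _ _ _ hij,
      Matrix.transvection_mul_apply_same]
    simp only [Matrix.transvection, Matrix.single, Matrix.add_apply, Matrix.one_apply,
      Matrix.diagonal_apply, Matrix.of_apply, hij, hji, and_true, true_and, false_and,
      if_false, if_true, eq_self_iff_true]
    split_ifs <;> simp_all
    all_goals try ring
    all_goals try rw [← mul_pow, mul_inv_cancel₀ ha, one_pow]
    all_goals field_simp
    all_goals try ring
  · rcases eq_or_ne r j with hrj | hrj
    · subst hrj
      rw [Matrix.transvection_mul_apply_same,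
        Matrix.transvection_mul_apply_of_ne _ _ _ _ hji,
        Matrix.transvection_mul_apply_same,
        Matrix.transvection_mul_apply_same,
        Matrix.transvection_mul_apply_of_ne _ _ _ _ hij,
        Matrix.transvection_mul_apply_same]
      simp only [Matrix.transvection, Matrix.single, Matrix.add_apply, Matrix.one_apply,
        Matrix.diagonal_apply, Matrix.of_apply, hij, hji, and_true, true_and, false_and,
        if_false, if_true, eq_self_iff_true]
      split_ifs <;> simp_all
      all_goals try ring
      all_goals try rw [← mul_pow, mul_inv_cancel₀ ha, one_pow]
      all_goals field_simp
      all_goals try ring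
    · rw [Matrix.transvection_mul_apply_of_ne _ _ _ _ hrj,
        Matrix.transvection_mul_apply_of_ne _ _ _ _ hri,
        Matrix.transvection_mul_apply_of_ne _ _ _ _ hrj]
      simp only [Matrix.transvection, Matrix.single, Matrix.add_apply, Matrix.one_apply,
        Matrix.diagonal_apply, Matrix.of_apply, hri, hrj, and_true, true_and, false_and,
        if_false, if_true, eq_self_iff_true]
      split_ifs <;> simp_all

lemma SPath_pair (i j : Fin n) (hij : i ≠ j) (a : K) (ha : a ≠ 0) :
    SPath (Matrix.diagonal (fun m => if m = i then a else if m = j then a⁻¹ else 1)) := by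
  rw [← pair_ident i j hij a ha]
  exact SPath_mul (SPath_mul (SPath_mul (SPath_transvection j i hij.symm 1)
    (SPath_transvection i j hij _)) (SPath_transvection j i hij.symm _))
    (SPath_transvection i j hij _)

open Classical in
lemma SPath_diagonal (k : ℕ) : ∀ D : Fin n → K,
    (Finset.univ.filter fun m => D m ≠ 1).card ≤ k →
    Matrix.det (Matrix.diagonal D) = 1 → SPath (Matrix.diagonal D) := by
  induction k with
  | zero =>
    intro D hcard _
    have : ∀ m, D m = 1 := by
      intro m
      by_contra hm
      have : m ∈ Finset.univ.filter fun m => D m ≠ 1 := by simp [hm]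
      have := Finset.card_pos.2 ⟨m, this⟩
      omega
    have : Matrix.diagonal D = 1 := by
      rw [show D = fun _ => (1 : K) from funext this, Matrix.diagonal_one]
    rw [this]; exact SPath_one
  | succ k IH =>
    intro D hcard hdet
    have hD0 : ∀ m, D m ≠ 0 := by
      intro m hm
      have hz : ∏ x, D x = 0 := Finset.prod_eq_zero (Finset.mem_univ m) hm
      rw [Matrix.det_diagonal, hz] at hdet
      exact one_ne_zero hdet.symm
    by_cases hall : ∀ m, D m = 1
    · have : Matrix.diagonal D = 1 := by
        rw [show D = fun _ => (1 : K) from funext hall, Matrix.diagonal_one]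
      rw [this]; exact SPath_one
    · push_neg at hall
      obtain ⟨i, hi⟩ := hall
      have hj : ∃ j, j ≠ i ∧ D j ≠ 1 := by
        by_contra hcon
        push_neg at hcon
        have : Matrix.det (Matrix.diagonal D) = D i := by
          rw [Matrix.det_diagonal]
          exact Finset.prod_eq_single i (fun b _ hb => hcon b hb) (by simp)
        exact hi (this ▸ hdet)
      obtain ⟨j, hji, hj⟩ := hj
      set D' : Fin n → K := fun m => if m = i then 1 else if m = j then D j * D i else D m
        with hD'
      have hsplit : Matrix.diagonal D = Matrix.diagonal D' *
          Matrix.diagonal (fun m => if m = i then D i else if m = j then (D i)⁻¹ else 1) := by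
        rw [Matrix.diagonal_mul_diagonal]
        refine congrArg Matrix.diagonal (funext fun m => ?_)
        rcases eq_or_ne m i with hmi | hmi
        · simp [hD', hmi, hji, Ne.symm hji]
        · rcases eq_or_ne m j with hmj | hmj
          · simp [hD', hmi, hmj, hji, mul_assoc, mul_inv_cancel₀ (hD0 i)]
          · simp [hD', hmi, hmj]
      have hdetpair : Matrix.det (Matrix.diagonal
          (fun m => if m = i then D i else if m = j then (D i)⁻¹ else 1)) = 1 := by
        rw [← pair_ident i j (Ne.symm hji) (D i) (hD0 i)]
        simp [Matrix.det_mul, Matrix.det_transvection_of_ne _ _ (Ne.symm hji),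
          Matrix.det_transvection_of_ne _ _ hji]
      have hdetD' : Matrix.det (Matrix.diagonal D') = 1 := by
        have := hsplit ▸ hdet
        rw [Matrix.det_mul, hdetpair, mul_one] at this
        exact this
      have hsub : (Finset.univ.filter fun m => D' m ≠ 1) ⊆
          (Finset.univ.filter fun m => D m ≠ 1).erase i := by
        intro m hm
        simp only [Finset.mem_filter, Finset.mem_univ, true_and] at hm
        rcases eq_or_ne m i with hmi | hmi
        · exact absurd (by simp [hD', hmi]) hm
        · refine Finset.mem_erase.2 ⟨hmi, Finset.mem_filter.2 ⟨Finset.mem_univ m, ?_⟩⟩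
          rcases eq_or_ne m j with hmj | hmj
          · exact hmj ▸ hj
          · intro h
            exact hm (by simp [hD', hmi, hmj, h])
      have hcard' : (Finset.univ.filter fun m => D' m ≠ 1).card ≤ k := by
        have h1 : i ∈ Finset.univ.filter fun m => D m ≠ 1 := by simp [hi]
        have h2 := Finset.card_le_card hsub
        have h3 := Finset.card_erase_of_mem h1
        omega
      rw [hsplit]
      exact SPath_mul (IH D' hcard' hdetD') (SPath_pair i j (Ne.symm hji) (D i) (hD0 i))

lemma SPath_of_det_one (B : Matrix (Fin n) (Fin n) K) (hB : B.det = 1) : SPath B := by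
  apply Matrix.diagonal_transvection_induction SPath B
  · intro D hD
    exact SPath_diagonal _ D le_rfl (by rw [hD, hB])
  · intro t
    exact SPath_transvection t.i t.j t.hij t.c
  · intro X Y hX hY
    exact SPath_mul hX hY

end IsotopyAux

/-- Two invertible matrices are connected, up to a scalar, by a polynomial path
with nowhere-vanishing determinant (i.e. determinant a nonzero constant) iff
their determinants differ by an n-th power. -/
theorem isotopy_iff_det_nth_power (K : Type*) [Field K] (n : ℕ) (hn : 1 ≤ n)
    (A A' : Matrix (Fin n) (Fin n) K) (hA : IsUnit A.det) (hA' : IsUnit A'.det) :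
    (∃ l : K, l ≠ 0 ∧ ∃ M : Matrix (Fin n) (Fin n) (Polynomial K),
        (∃ cst : K, cst ≠ 0 ∧ M.det = C cst) ∧
        M.map (Polynomial.eval 0) = A ∧
        M.map (Polynomial.eval 1) = l • A')
      ↔ (∃ μ : K, μ ≠ 0 ∧ A.det = μ ^ n * A'.det) := by
  constructor
  · rintro ⟨l, hl, M, ⟨cst, hcst, hdet⟩, h0, h1⟩
    refine ⟨l, hl, ?_⟩
    have e0 : A.det = cst := by
      rw [← h0]
      have : M.map (Polynomial.eval 0) =
          (Polynomial.evalRingHom 0 : Polynomial K →+* K).mapMatrix M := rfl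
      rw [this, ← RingHom.map_det, hdet]
      simp
    have e1 : l ^ n * A'.det = cst := by
      have h2 : M.map (Polynomial.eval 1) =
          (Polynomial.evalRingHom 1 : Polynomial K →+* K).mapMatrix M := rfl
      have h3 : ((Polynomial.evalRingHom 1 : Polynomial K →+* K).mapMatrix M).det = cst := by
        rw [← RingHom.map_det, hdet]; simp
      rw [← h2, h1, Matrix.det_smul] at h3
      simpa using h3
    rw [e0, e1]
  · rintro ⟨μ, hμ, hdet⟩
    have hAd : A.det ≠ 0 := hA.ne_zero
    set B : Matrix (Fin n) (Fin n) K := A⁻¹ * (μ • A') with hB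
    have hBdet : B.det = 1 := by
      rw [hB, Matrix.det_mul, Matrix.det_nonsing_inv, Matrix.det_smul, Fintype.card_fin,
        ← hdet]
      rw [Ring.inverse_eq_inv]
      exact inv_mul_cancel₀ hAd
    obtain ⟨M, hMdet, hM0, hM1⟩ := IsotopyAux.SPath_of_det_one B hBdet
    have hM0' : M.map ⇑(Polynomial.evalRingHom (0 : K)) = 1 := hM0
    have hM1' : M.map ⇑(Polynomial.evalRingHom (1 : K)) = B := hM1
    refine ⟨μ, hμ, (A.map (Polynomial.C)) * M, ⟨A.det, hAd, ?_⟩, ?_, ?_⟩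
    · rw [Matrix.det_mul, hMdet, mul_one]
      have : A.map Polynomial.C = (Polynomial.C : K →+* Polynomial K).mapMatrix A := rfl
      rw [this, ← RingHom.map_det]
    · show ((A.map Polynomial.C) * M).map ⇑(Polynomial.evalRingHom (0 : K)) = A
      rw [Matrix.map_mul, hM0', mul_one, Matrix.map_map]
      ext r s
      simp
    · show ((A.map Polynomial.C) * M).map ⇑(Polynomial.evalRingHom (1 : K)) = μ • A'
      rw [Matrix.map_mul, hM1', Matrix.map_map]
      have hAC : A.map (⇑(Polynomial.evalRingHom (1 : K)) ∘ Polynomial.C) = A := by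
        ext r s
        simp
      rw [hAC, hB, ← Matrix.mul_assoc, Matrix.mul_nonsing_inv A hA, Matrix.one_mul]
end
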